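/- arXiv:2011.00079 — 3 statements merged into one kernel-verified Lean document; each statement's English description precedes it below -/
import Mathlib

section
/- Let Ω ⊆ ℂ be open, let h, g : Ω → ℂ be holomorphic, and set f = h + conj ∘ g. Let I ⊆ ℝ be an open interval and let γ : I → Ω be differentiable with g'(γ(t)) = e^{it} · h'(γ(t)) for all t ∈ I (so γ parametrizes part of the critical set of f, on which |∂f| = |∂̄f|). Then for every t_0 ∈ I the curve f ∘ γ is differentiable at t_0 with derivative (f ∘ γ)'(t_0) = e^{−i t_0/2} ψ(t_0), where ψ(t) = 2 Re( e^{i t/2} h'(γ(t)) γ'(t) ); in particular e^{i t_0/2} (f ∘ γ)'(t_0) is a real number. -/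
/-!
By the chain rule `(f ∘ γ)' = h'(γ) γ' + conj (g'(γ) γ')`, and on the critical curve
`g'(γ(t)) = e^{it} h'(γ(t))`. With `w = e^{it/2} h'(γ) γ'` this is `e^{-it/2} (w + w̄) = e^{-it/2} · 2 Re w`.
-/

open Filter Metric Set Topology

noncomputable section

/-- The Wirtinger derivative ∂f = (1/2)(∂f/∂x − i ∂f/∂y). -/
def wDz (f : ℂ → ℂ) (z : ℂ) : ℂ :=
  (fderiv ℝ f z 1 - Complex.I * fderiv ℝ f z Complex.I) / 2

/-- The Wirtinger derivative ∂̄f = (1/2)(∂f/∂x + i ∂f/∂y). -/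
def wDzbar (f : ℂ → ℂ) (z : ℂ) : ℂ :=
  (fderiv ℝ f z 1 + Complex.I * fderiv ℝ f z Complex.I) / 2

/-- A harmonic mapping on an open set: locally `f = h + conj ∘ g` with `h`, `g` holomorphic. -/
def IsHarmonicMappingOn (f : ℂ → ℂ) (Ω : Set ℂ) : Prop :=
  ∀ z ∈ Ω, ∃ ε > 0, Metric.ball z ε ⊆ Ω ∧ ∃ h g : ℂ → ℂ,
    DifferentiableOn ℂ h (Metric.ball z ε) ∧ DifferentiableOn ℂ g (Metric.ball z ε) ∧
    ∀ w ∈ Metric.ball z ε, f w = h w + (starRingEnd ℂ) (g w)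

/-- The harmonic Newton map of `f − η`. -/
def newtonMap (f : ℂ → ℂ) (η : ℂ) (z : ℂ) : ℂ :=
  z - ((starRingEnd ℂ) (wDz f z) * (f z - η) - wDzbar f z * (starRingEnd ℂ) (f z - η)) /
      (((‖wDz f z‖ ^ 2 - ‖wDzbar f z‖ ^ 2 : ℝ)) : ℂ)

/-- `zstar` attracts `s` under the harmonic Newton map of `f − η`. -/
def NewtonAttracts (f : ℂ → ℂ) (η : ℂ) (s zstar : ℂ) : Prop :=
  Filter.Tendsto (fun k => (newtonMap f η)^[k] s) Filter.atTop (nhds zstar)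

/-- Limit of the harmonic Newton iteration started at `s`. -/
def newtonLim (f : ℂ → ℂ) (η : ℂ) (s : ℂ) : ℂ :=
  limUnder Filter.atTop (fun k => (newtonMap f η)^[k] s)

/-- `S` is a (minimal) prediction set for the solution set `Z` of `f(z) = η`. -/
def IsPredSet (f : ℂ → ℂ) (η : ℂ) (S Z : Set ℂ) : Prop :=
  S.Finite ∧ Z.Finite ∧ S.ncard = Z.ncard ∧
    ∀ z ∈ Z, ∃! s, s ∈ S ∧ NewtonAttracts f η s z

open Complex ComplexConjugate

theorem HasDerivAt.add_conj_comp {γ : ℝ → ℂ} {h g : ℂ → ℂ} {h' g' v : ℂ} {t : ℝ}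
    (hh : HasDerivAt h h' (γ t)) (hg : HasDerivAt g g' (γ t)) (hγ : HasDerivAt γ v t) :
    HasDerivAt (fun s => h (γ s) + conj (g (γ s))) (h' * v + conj (g' * v)) t := by
  have hconj := conjCLE.hasFDerivAt.comp_hasDerivAt t (hg.scomp t hγ)
  rw [smul_eq_mul, mul_comm v] at hconj
  exact mul_comm h' v ▸ (hh.scomp t hγ).add hconj

theorem conj_exp_mul_I_half (θ : ℝ) : conj (exp (I * θ / 2)) = (exp (I * θ / 2))⁻¹ := by
  rw [← exp_conj, ← exp_neg]
  congr 1
  simp only [map_div₀, map_mul, conj_I, conj_ofReal, neg_mul, map_ofNat]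
  ring

/-- Writing `u = e^{iθ/2}`, both sides equal `z + u⁻² z̄`. -/
theorem add_conj_exp_mul_I (θ : ℝ) (z : ℂ) :
    z + conj (exp (I * θ) * z) = exp (-I * θ / 2) * ((2 * (exp (I * θ / 2) * z).re : ℝ) : ℂ) := by
  have hu : exp (I * θ / 2) ≠ 0 := exp_ne_zero _
  have hsq : exp (I * θ) = exp (I * θ / 2) * exp (I * θ / 2) := by rw [← exp_add]; ring_nf
  have hinv : exp (-I * θ / 2) = (exp (I * θ / 2))⁻¹ := by rw [← exp_neg]; ring_nf
  rw [hsq, hinv, ← add_conj, map_mul, map_mul, map_mul, conj_exp_mul_I_half]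
  field_simp

theorem exp_mul_I_half_mul_exp_neg (θ : ℝ) (z : ℂ) :
    exp (I * θ / 2) * (exp (-I * θ / 2) * z) = z := by
  rw [← mul_assoc, ← exp_add]
  ring_nf
  simp

/-- Tangent vector to the caustic: (f ∘ γ)'(t₀) = e^{−i t₀/2} ψ(t₀) where
ψ(t) = 2 Re(e^{i t/2} h'(γ(t)) γ'(t)); in particular e^{i t₀/2} (f ∘ γ)'(t₀) is real. -/
theorem tangent_to_caustic (Ω : Set ℂ) (hΩ : IsOpen Ω) (h g : ℂ → ℂ)
    (hh : DifferentiableOn ℂ h Ω) (hg : DifferentiableOn ℂ g Ω)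
    (f : ℂ → ℂ) (hf : ∀ z, f z = h z + (starRingEnd ℂ) (g z))
    (a b : ℝ) (γ γ' : ℝ → ℂ)
    (hγΩ : ∀ t ∈ Set.Ioo a b, γ t ∈ Ω)
    (hγ : ∀ t ∈ Set.Ioo a b, HasDerivAt γ (γ' t) t)
    (hcrit : ∀ t ∈ Set.Ioo a b,
      deriv g (γ t) = Complex.exp (Complex.I * (t : ℂ)) * deriv h (γ t))
    (ψ : ℝ → ℝ)
    (hψ : ∀ t : ℝ, ψ t = 2 * (Complex.exp (Complex.I * (t : ℂ) / 2) * deriv h (γ t) * γ' t).re)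
    (t₀ : ℝ) (ht₀ : t₀ ∈ Set.Ioo a b) :
    HasDerivAt (fun t : ℝ => f (γ t))
      (Complex.exp (-Complex.I * (t₀ : ℂ) / 2) * ((ψ t₀ : ℝ) : ℂ)) t₀ ∧
    ∃ x : ℝ, Complex.exp (Complex.I * (t₀ : ℂ) / 2) * deriv (fun t : ℝ => f (γ t)) t₀
      = (x : ℂ) := by
  have hγ₀ : Ω ∈ 𝓝 (γ t₀) := hΩ.mem_nhds (hγΩ t₀ ht₀)
  have hderiv := (hh.differentiableAt hγ₀).hasDerivAt.add_conj_comp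
    (hg.differentiableAt hγ₀).hasDerivAt (hγ t₀ ht₀)
  rw [hcrit t₀ ht₀, mul_assoc, add_conj_exp_mul_I, ← mul_assoc, ← hψ] at hderiv
  simp only [← hf] at hderiv
  exact ⟨hderiv, ψ t₀, by rw [hderiv.deriv, exp_mul_I_half_mul_exp_neg]⟩
end
end

section
/- Let Ω ⊆ ℂ be open, let h, g : Ω → ℂ be holomorphic, and set f = h + conj ∘ g. Let I ⊆ ℝ be an open interval and let γ : I → Ω be differentiable with g'(γ(t)) = e^{it} · h'(γ(t)) for all t ∈ I. Write τ(t) = (f ∘ γ)'(t) and ψ(t) = 2 Re( e^{i t/2} h'(γ(t)) γ'(t) ). Let t_0 ∈ I with ψ(t_0) ≠ 0, and let θ be a real-valued function, continuous on a neighborhood J ⊆ I of t_0, such that τ(t) = |τ(t)| e^{i θ(t)} for all t ∈ J (a continuous argument of the tangent vector). Then θ is differentiable at t_0 with θ'(t_0) = −1/2; i.e., the rate of change of the argument of the tangent vector to the caustic parametrized by f ∘ γ is constantly −1/2. -/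
open Filter Metric Set Topology

noncomputable section

/-! On the critical curve `g'(γ t) = e^{it} h'(γ t)` the tangent vector is
`(f ∘ γ)'(t) = ψ(t) e^{-it/2}` with `ψ` real, so wherever `ψ ≠ 0` the continuous function
`θ(t) + t/2` takes values in the discrete set `πℤ` and is therefore locally constant.
That `ψ` stays nonzero near `t₀` needs continuity of `γ'`, which is not assumed: it holds because
`w = g'/h'` is holomorphic near `γ t₀` with `w ∘ γ = e^{it}`, hence `γ' = i e^{it} / w'(γ)`. -/

open Complex ComplexConjugate

theorem sub_mem_zmultiples_pi_of_ofReal_mul_exp_eq {r α β : ℝ} (hr : r ≠ 0)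
    (h : (r : ℂ) * exp (I * α) = |r| * exp (I * β)) :
    β - α ∈ AddSubgroup.zmultiples Real.pi := by
  have hrot : (r : ℂ) = |r| * exp (I * (β - α : ℝ)) := by
    rw [ofReal_sub, mul_sub, exp_sub, ← mul_div_assoc, ← h,
      mul_div_cancel_right₀ _ (exp_ne_zero _)]
  have him := congrArg Complex.im hrot
  rw [ofReal_im, im_ofReal_mul, mul_comm I, exp_ofReal_mul_I_im, eq_comm, mul_eq_zero] at him
  obtain ⟨n, hn⟩ := Real.sin_eq_zero_iff.mp (him.resolve_left (abs_ne_zero.mpr hr))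
  exact ⟨n, by simp only [zsmul_eq_mul, hn]⟩

theorem Filter.EventuallyEq.of_continuousOn_of_mapsTo_isDiscrete {α β : Type*}
    [TopologicalSpace α] [LocallyConnectedSpace α] [TopologicalSpace β] {s : Set α} {T : Set β}
    {φ : α → β} {x : α} (hs : s ∈ 𝓝 x) (hT : IsDiscrete T) (hφ : ContinuousOn φ s)
    (hφT : MapsTo φ s T) : φ =ᶠ[𝓝 x] fun _ => φ x := by
  filter_upwards [connectedComponentIn_mem_nhds hs] with y hy
  exact isPreconnected_connectedComponentIn.constant_of_mapsTo hT
    (hφ.mono (connectedComponentIn_subset _ _)) (hφT.mono_left (connectedComponentIn_subset _ _))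
    hy (mem_connectedComponentIn (mem_of_mem_nhds hs))

theorem isDiscrete_zmultiples (a : ℝ) : IsDiscrete (AddSubgroup.zmultiples a : Set ℝ) :=
  isDiscrete_iff_discreteTopology.mpr (inferInstance : DiscreteTopology (AddSubgroup.zmultiples a))

theorem hasDerivAt_add_conj_comp {h g : ℂ → ℂ} {γ : ℝ → ℂ} {γ' : ℂ} {t : ℝ}
    (hh : DifferentiableAt ℂ h (γ t)) (hg : DifferentiableAt ℂ g (γ t))
    (hγ : HasDerivAt γ γ' t) :
    HasDerivAt (fun u => h (γ u) + conj (g (γ u)))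
      (γ' * deriv h (γ t) + conj (γ' * deriv g (γ t))) t :=
  (hh.hasDerivAt.scomp t hγ).add (hg.hasDerivAt.scomp t hγ).star

theorem add_conj_exp_mul (A : ℂ) (t : ℝ) :
    A + conj (exp (I * (t : ℂ)) * A) =
      (2 * (exp (I * (t : ℂ) / 2) * A).re : ℝ) * exp (-(I * (t : ℂ)) / 2) := by
  have hconj : conj (exp (I * (t : ℂ) / 2)) = exp (-(I * (t : ℂ)) / 2) := by
    rw [← exp_conj, map_div₀, map_mul, conj_I, conj_ofReal, map_ofNat, neg_mul]
  have hsq : exp (I * (t : ℂ)) = exp (I * (t : ℂ) / 2) * exp (I * (t : ℂ) / 2) := by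
    rw [← exp_add, add_halves]
  have hinv : exp (I * (t : ℂ) / 2) * exp (-(I * (t : ℂ)) / 2) = 1 := by
    rw [← exp_add, neg_div, add_neg_cancel, exp_zero]
  rw [← add_conj, hsq, map_mul, map_mul, map_mul, hconj]
  linear_combination (-A) * hinv

theorem hasDerivAt_add_conj_comp_of_deriv_eq_exp_mul {h g : ℂ → ℂ} {γ : ℝ → ℂ} {γ' : ℂ}
    {t : ℝ} (hh : DifferentiableAt ℂ h (γ t)) (hg : DifferentiableAt ℂ g (γ t))
    (hγ : HasDerivAt γ γ' t) (hcrit : deriv g (γ t) = exp (I * (t : ℂ)) * deriv h (γ t)) :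
    HasDerivAt (fun u => h (γ u) + conj (g (γ u)))
      ((2 * (exp (I * (t : ℂ) / 2) * deriv h (γ t) * γ').re : ℝ) *
        exp (-(I * (t : ℂ)) / 2)) t := by
  convert hasDerivAt_add_conj_comp hh hg hγ using 1
  rw [hcrit, mul_assoc, ← add_conj_exp_mul]
  ring_nf

theorem continuousOn_of_comp_eq_exp {U : Set ℂ} {V : Set ℝ} (hU : IsOpen U) (hV : IsOpen V)
    {w : ℂ → ℂ} (hw : DifferentiableOn ℂ w U) {γ γ' : ℝ → ℂ} (hγU : MapsTo γ V U)
    (hγ : ∀ t ∈ V, HasDerivAt γ (γ' t) t) (hwγ : ∀ t ∈ V, w (γ t) = exp (I * t)) :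
    ContinuousOn γ' V := by
  have hchain : ∀ t ∈ V, γ' t * deriv w (γ t) = I * exp (I * t) := by
    intro t ht
    have hcomp : HasDerivAt (fun u => w (γ u)) (γ' t * deriv w (γ t)) t :=
      (hw.differentiableAt (hU.mem_nhds (hγU ht))).hasDerivAt.scomp t (hγ t ht)
    have hexp : HasDerivAt (fun u : ℝ => exp (I * u)) (I * exp (I * t)) t := by
      simpa [mul_comm] using (((hasDerivAt_id (t : ℂ)).const_mul I).cexp).comp_ofReal
    exact hcomp.unique (hexp.congr_of_eventuallyEq (eventually_of_mem (hV.mem_nhds ht) hwγ))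
  have hne : ∀ t ∈ V, deriv w (γ t) ≠ 0 := fun t ht h0 => by
    simpa [h0, exp_ne_zero] using hchain t ht
  have hγc : ContinuousOn γ V := fun t ht => (hγ t ht).continuousAt.continuousWithinAt
  refine ContinuousOn.congr (f := fun t : ℝ => I * exp (I * t) / deriv w (γ t)) ?_ ?_
  · exact (by fun_prop : Continuous fun t : ℝ => I * exp (I * t)).continuousOn.div
      ((hw.deriv hU).continuousOn.comp hγc hγU) hne
  · intro t ht
    rw [eq_div_iff (hne t ht), hchain t ht]

theorem continuousAt_of_deriv_eq_exp_mul_deriv {Ω : Set ℂ} (hΩ : IsOpen Ω) {h g : ℂ → ℂ}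
    (hh : DifferentiableOn ℂ h Ω) (hg : DifferentiableOn ℂ g Ω) {T : Set ℝ} (hT : IsOpen T)
    {γ γ' : ℝ → ℂ} (hγΩ : MapsTo γ T Ω) (hγ : ∀ t ∈ T, HasDerivAt γ (γ' t) t)
    (hcrit : ∀ t ∈ T, deriv g (γ t) = exp (I * t) * deriv h (γ t)) {t₀ : ℝ} (ht₀ : t₀ ∈ T)
    (hh₀ : deriv h (γ t₀) ≠ 0) : ContinuousAt γ' t₀ := by
  set U := Ω ∩ deriv h ⁻¹' {0}ᶜ
  have hU : IsOpen U :=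
    (hh.deriv hΩ).continuousOn.isOpen_inter_preimage hΩ isOpen_compl_singleton
  have hV : IsOpen (T ∩ γ ⁻¹' U) :=
    ContinuousOn.isOpen_inter_preimage (fun t ht => (hγ t ht).continuousAt.continuousWithinAt)
      hT hU
  have hw : DifferentiableOn ℂ (fun z => deriv g z / deriv h z) U :=
    ((hg.deriv hΩ).mono inter_subset_left).div ((hh.deriv hΩ).mono inter_subset_left)
      fun z hz => hz.2
  refine (continuousOn_of_comp_eq_exp hU hV hw (fun t ht => ht.2) (fun t ht => hγ t ht.1)
    fun t ht => ?_).continuousAt (hV.mem_nhds ⟨ht₀, hγΩ ht₀, hh₀⟩)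
  rw [hcrit t ht.1, mul_div_cancel_right₀ _ ht.2.2]

theorem caustic_argument_derivative_general (Ω : Set ℂ) (hΩ : IsOpen Ω) (h g : ℂ → ℂ)
    (hh : DifferentiableOn ℂ h Ω) (hg : DifferentiableOn ℂ g Ω)
    (f : ℂ → ℂ) (hf : ∀ z, f z = h z + (starRingEnd ℂ) (g z))
    (a b : ℝ) (γ γ' : ℝ → ℂ)
    (hγΩ : ∀ t ∈ Set.Ioo a b, γ t ∈ Ω)
    (hγ : ∀ t ∈ Set.Ioo a b, HasDerivAt γ (γ' t) t)
    (hcrit : ∀ t ∈ Set.Ioo a b,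
      deriv g (γ t) = Complex.exp (Complex.I * (t : ℂ)) * deriv h (γ t))
    (ψ : ℝ → ℝ)
    (hψ : ∀ t : ℝ, ψ t = 2 * (Complex.exp (Complex.I * (t : ℂ) / 2) * deriv h (γ t) * γ' t).re)
    (t₀ : ℝ) (ht₀ : t₀ ∈ Set.Ioo a b) (hψt₀ : ψ t₀ ≠ 0)
    (θ : ℝ → ℝ) (J : Set ℝ) (hJ : J ∈ nhds t₀)
    (hθcont : ContinuousOn θ J)
    (hθarg : ∀ t ∈ J, deriv (fun u : ℝ => f (γ u)) t =
      ((‖deriv (fun u : ℝ => f (γ u)) t‖ : ℝ) : ℂ) *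
        Complex.exp (Complex.I * ((θ t : ℝ) : ℂ))) :
    HasDerivAt θ (-(1 / 2)) t₀ := by
  have hh₀ : deriv h (γ t₀) ≠ 0 := fun h0 => hψt₀ (by simp [hψ, h0])
  have hγ'c : ContinuousAt γ' t₀ :=
    continuousAt_of_deriv_eq_exp_mul_deriv hΩ hh hg isOpen_Ioo hγΩ hγ hcrit ht₀ hh₀
  have hψc : ContinuousAt ψ t₀ := by
    have hh'γ : ContinuousAt (fun t => deriv h (γ t)) t₀ :=
      ((hh.deriv hΩ).continuousOn.continuousAt (hΩ.mem_nhds (hγΩ t₀ ht₀))).comp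
        (hγ t₀ ht₀).continuousAt
    rw [funext hψ]
    fun_prop
  have hτ : ∀ t ∈ Ioo a b, deriv (fun u => f (γ u)) t = ψ t * exp (-(I * t) / 2) := by
    intro t ht
    simp only [hf, hψ]
    exact (hasDerivAt_add_conj_comp_of_deriv_eq_exp_mul
      (hh.differentiableAt (hΩ.mem_nhds (hγΩ t ht)))
      (hg.differentiableAt (hΩ.mem_nhds (hγΩ t ht))) (hγ t ht) (hcrit t ht)).deriv
  have hmod : ∀ᶠ t in 𝓝 t₀, θ t + t / 2 ∈ AddSubgroup.zmultiples Real.pi := by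
    filter_upwards [hJ, isOpen_Ioo.mem_nhds ht₀, hψc.eventually_ne hψt₀] with t htJ ht hψt
    have hα : -(I * t) / 2 = I * ((-(t / 2) : ℝ) : ℂ) := by push_cast; ring
    have harg := hθarg t htJ
    rw [hτ t ht, hα, norm_mul, norm_exp_I_mul_ofReal, mul_one, norm_real, Real.norm_eq_abs]
      at harg
    simpa only [sub_neg_eq_add] using sub_mem_zmultiples_pi_of_ofReal_mul_exp_eq hψt harg
  obtain ⟨s, hs, hsmod⟩ := hmod.exists_mem
  have hconst := EventuallyEq.of_continuousOn_of_mapsTo_isDiscrete (inter_mem hs hJ)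
    (isDiscrete_zmultiples Real.pi) ((hθcont.mono inter_subset_right).add (by fun_prop))
    fun t ht => hsmod t ht.1
  have hlin : HasDerivAt (fun t => θ t₀ + t₀ / 2 - t / 2) (-(1 / 2)) t₀ := by
    simpa using ((hasDerivAt_id t₀).div_const 2).const_sub (θ t₀ + t₀ / 2)
  exact hlin.congr_of_eventuallyEq <| hconst.mono fun t ht => by
    simp only [Pi.add_apply] at ht
    linarith

/-- At a fold point (ψ(t₀) ≠ 0), any continuous argument θ of the tangent vector
τ = (f ∘ γ)' satisfies θ'(t₀) = −1/2: the curvature of the caustics is constant. -/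
theorem caustic_argument_derivative (Ω : Set ℂ) (hΩ : IsOpen Ω) (h g : ℂ → ℂ)
    (hh : DifferentiableOn ℂ h Ω) (hg : DifferentiableOn ℂ g Ω)
    (f : ℂ → ℂ) (hf : ∀ z, f z = h z + (starRingEnd ℂ) (g z))
    (a b : ℝ) (γ γ' : ℝ → ℂ)
    (hγΩ : ∀ t ∈ Set.Ioo a b, γ t ∈ Ω)
    (hγ : ∀ t ∈ Set.Ioo a b, HasDerivAt γ (γ' t) t)
    (hcrit : ∀ t ∈ Set.Ioo a b,
      deriv g (γ t) = Complex.exp (Complex.I * (t : ℂ)) * deriv h (γ t))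
    (ψ : ℝ → ℝ)
    (hψ : ∀ t : ℝ, ψ t = 2 * (Complex.exp (Complex.I * (t : ℂ) / 2) * deriv h (γ t) * γ' t).re)
    (t₀ : ℝ) (ht₀ : t₀ ∈ Set.Ioo a b) (hψt₀ : ψ t₀ ≠ 0)
    (θ : ℝ → ℝ) (J : Set ℝ) (hJ : J ∈ nhds t₀) (hJI : J ⊆ Set.Ioo a b)
    (hθcont : ContinuousOn θ J)
    (hθarg : ∀ t ∈ J, deriv (fun u : ℝ => f (γ u)) t =
      ((‖deriv (fun u : ℝ => f (γ u)) t‖ : ℝ) : ℂ) *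
        Complex.exp (Complex.I * ((θ t : ℝ) : ℂ))) :
    HasDerivAt θ (-(1 / 2)) t₀ :=
  caustic_argument_derivative_general Ω hΩ h g hh hg f hf a b γ γ' hγΩ hγ hcrit ψ hψ t₀ ht₀ hψt₀ θ J
    hJ hθcont hθarg
end
end

section
/- Let f be a harmonic mapping on an open set Ω ⊆ ℂ, let z_0 ∈ Ω with J_f(z_0) ≠ 0, and put η_1 = f(z_0). Then there exist ε > 0 and δ > 0 such that for each η_2 ∈ ℂ with |η_2 − η_1| < ε there exists a unique z_* with |z_* − z_0| < δ and f(z_*) = η_2; moreover, z_* attracts z_0 under the harmonic Newton map H_{f−η_2}, i.e., the iterates H_{f−η_2}^k(z_0) converge to z_* as k → ∞. -/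
/-!
The Wirtinger derivatives are the coefficients of the real derivative,
`Df(z) w = ∂f(z) w + ∂̄f(z) w̄`, and `J_f` is its determinant. Inverting `w ↦ a w + b w̄`
explicitly shows that the harmonic Newton map is Newton's method `z - Df(z)⁻¹ (f z - η)` for `f`
seen as a map of the real plane, so the only property of harmonic mappings that matters is that
they are `C¹`. Near a point where `Df` is invertible, the mean value inequality makes one Newton
step halve the distance to any solution in a small ball: this gives uniqueness of the solution
there and convergence of the iterates started at `z₀`. Existence comes from the inverse function
theorem, as `f` maps neighbourhoods of `z₀` onto neighbourhoods of `f z₀`.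
-/

open Filter Metric Set Topology

noncomputable section

open ComplexConjugate

theorem tendsto_iterate_of_dist_le_mul {X : Type*} [PseudoMetricSpace X] {N : X → X} {z x : X}
    {r K : ℝ} (hK₀ : 0 ≤ K) (hK : K < 1) (hN : ∀ y ∈ ball z r, dist (N y) z ≤ K * dist y z)
    (hx : x ∈ ball z r) : Tendsto (fun n => N^[n] x) atTop (𝓝 z) := by
  have hdist : ∀ n, dist (N^[n] x) z ≤ K ^ n * dist x z := by
    intro n
    induction n with
    | zero => simp
    | succ n ih =>
      have hmem : N^[n] x ∈ ball z r :=
        (ih.trans (mul_le_of_le_one_left dist_nonneg (pow_le_one₀ hK₀ hK.le))).trans_lt hx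
      calc dist (N^[n + 1] x) z = dist (N (N^[n] x)) z := by rw [Function.iterate_succ_apply']
        _ ≤ K * dist (N^[n] x) z := hN _ hmem
        _ ≤ K * (K ^ n * dist x z) := by gcongr
        _ = K ^ (n + 1) * dist x z := by ring
  rw [tendsto_iff_dist_tendsto_zero]
  refine squeeze_zero (fun _ => dist_nonneg) hdist ?_
  simpa using (tendsto_pow_atTop_nhds_zero_of_lt_one hK₀ hK).mul_const (dist x z)

section Newton

variable {E F : Type*} [NormedAddCommGroup E] [NormedSpace ℝ E]
  [NormedAddCommGroup F] [NormedSpace ℝ F]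

def fderivNewtonMap (f : E → F) (η : F) (x : E) : E :=
  x - (fderiv ℝ f x).inverse (f x - η)

theorem fderivNewtonMap_of_eq {f : E → F} {η : F} {x : E} (hx : f x = η) :
    fderivNewtonMap f η x = x := by
  simp [fderivNewtonMap, hx]

theorem Convex.norm_fderivNewtonMap_sub_le {f : E → F} {s : Set E} (hs : Convex ℝ s)
    (hf : ∀ x ∈ s, DifferentiableAt ℝ f x) {p q : E} {C : ℝ}
    (hC : ∀ x ∈ s, ‖fderiv ℝ f x - fderiv ℝ f p‖ ≤ C) (hp : p ∈ s) (hq : q ∈ s)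
    (hinv : (fderiv ℝ f p).IsInvertible) :
    ‖fderivNewtonMap f (f q) p - q‖ ≤ ‖(fderiv ℝ f p).inverse‖ * C * ‖p - q‖ := by
  have hstep : fderivNewtonMap f (f q) p - q =
      (fderiv ℝ f p).inverse (f q - f p - fderiv ℝ f p (q - p)) := by
    simp only [fderivNewtonMap, map_sub, hinv.inverse_apply_self]
    abel
  calc ‖fderivNewtonMap f (f q) p - q‖
      ≤ ‖(fderiv ℝ f p).inverse‖ * ‖f q - f p - fderiv ℝ f p (q - p)‖ := by
        rw [hstep]; exact ContinuousLinearMap.le_opNorm _ _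
    _ ≤ ‖(fderiv ℝ f p).inverse‖ * (C * ‖q - p‖) := by
        gcongr; exact hs.norm_image_sub_le_of_norm_fderiv_le' hf hC hp hq
    _ = ‖(fderiv ℝ f p).inverse‖ * C * ‖p - q‖ := by rw [norm_sub_rev]; ring

theorem ContDiffAt.exists_ball_norm_fderivNewtonMap_sub_le [CompleteSpace E] {f : E → F}
    {x₀ : E} (hf : ContDiffAt ℝ 1 f x₀) (hinv : (fderiv ℝ f x₀).IsInvertible) :
    ∃ r > 0, ∀ p ∈ ball x₀ r, ∀ q ∈ ball x₀ r,
      ‖fderivNewtonMap f (f q) p - q‖ ≤ 2⁻¹ * ‖p - q‖ := by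
  set M := ‖(fderiv ℝ f x₀).inverse‖ + 1
  have hM : 0 < M := by positivity
  have hDf := hf.continuousAt_fderiv one_ne_zero
  have hev : ∀ᶠ x in 𝓝 x₀, DifferentiableAt ℝ f x ∧ (fderiv ℝ f x).IsInvertible ∧
      ‖(fderiv ℝ f x).inverse‖ < M ∧ ‖fderiv ℝ f x - fderiv ℝ f x₀‖ < (4 * M)⁻¹ := by
    refine ((hf.eventually (by simp)).mono fun x hx => hx.differentiableAt one_ne_zero).and
      (.and ?_ (.and ?_ ?_))
    · exact hDf.preimage_mem_nhds (ContinuousLinearEquiv.isOpen.mem_nhds hinv)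
    · exact ((hinv.contDiffAt_map_inverse (n := 0)).continuousAt.comp hDf).norm.eventually_lt_const
        (lt_add_one _)
    · filter_upwards [hDf.eventually (ball_mem_nhds _ (inv_pos.mpr (by positivity : 0 < 4 * M)))]
        with x hx
      rwa [dist_eq_norm] at hx
  obtain ⟨r, hr, hball⟩ := Metric.eventually_nhds_iff_ball.mp hev
  refine ⟨r, hr, fun p hp q hq => ?_⟩
  obtain ⟨-, hpinv, hpM, hp₀⟩ := hball p hp
  have hC : ∀ x ∈ ball x₀ r, ‖fderiv ℝ f x - fderiv ℝ f p‖ ≤ (2 * M)⁻¹ := fun x hx => by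
    calc ‖fderiv ℝ f x - fderiv ℝ f p‖
        = ‖(fderiv ℝ f x - fderiv ℝ f x₀) - (fderiv ℝ f p - fderiv ℝ f x₀)‖ := by
          rw [sub_sub_sub_cancel_right]
      _ ≤ (4 * M)⁻¹ + (4 * M)⁻¹ := (norm_sub_le _ _).trans (add_le_add (hball x hx).2.2.2.le hp₀.le)
      _ = (2 * M)⁻¹ := by field_simp; ring
  calc ‖fderivNewtonMap f (f q) p - q‖ ≤ ‖(fderiv ℝ f p).inverse‖ * (2 * M)⁻¹ * ‖p - q‖ :=
        (convex_ball _ _).norm_fderivNewtonMap_sub_le (fun x hx => (hball x hx).1) hC hp hq hpinv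
    _ ≤ M * (2 * M)⁻¹ * ‖p - q‖ := by gcongr
    _ = 2⁻¹ * ‖p - q‖ := by field_simp

theorem ContDiffAt.exists_unique_solution_newton_tendsto [CompleteSpace E] {f : E → F} {x₀ : E}
    (hf : ContDiffAt ℝ 1 f x₀) (hinv : (fderiv ℝ f x₀).IsInvertible) :
    ∃ ε > 0, ∃ δ > 0, ∀ η ∈ ball (f x₀) ε, (∃! z, z ∈ ball x₀ δ ∧ f z = η) ∧
      ∀ z ∈ ball x₀ δ, f z = η → Tendsto (fun k => (fderivNewtonMap f η)^[k] x₀) atTop (𝓝 z) := by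
  obtain ⟨r, hr, hcontr⟩ := hf.exists_ball_norm_fderivNewtonMap_sub_le hinv
  have hδ : 0 < r / 2 := by positivity
  have hsub : ball x₀ (r / 2) ⊆ ball x₀ r := ball_subset_ball (by linarith)
  have himage : f '' ball x₀ (r / 2) ∈ 𝓝 (f x₀) := by
    obtain ⟨e, he⟩ := hinv
    have hderiv : HasFDerivAt f (e : E →L[ℝ] F) x₀ :=
      he ▸ (hf.differentiableAt one_ne_zero).hasFDerivAt
    rw [← (hf.hasStrictFDerivAt' hderiv one_ne_zero).map_nhds_eq_of_equiv]
    exact image_mem_map (ball_mem_nhds _ hδ)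
  obtain ⟨ε, hε, hεsub⟩ := Metric.mem_nhds_iff.mp himage
  refine ⟨ε, hε, r / 2, hδ, fun η hη => ⟨?_, fun z hz hfz => ?_⟩⟩
  · obtain ⟨z, hz, rfl⟩ := hεsub hη
    refine ⟨z, ⟨hz, rfl⟩, fun y ⟨hy, hfy⟩ => ?_⟩
    -- a zero of `f - f z` is a fixed point of the Newton map, which contracts towards `z`
    have h := hcontr y (hsub hy) z (hsub hz)
    rw [fderivNewtonMap_of_eq hfy] at h
    exact sub_eq_zero.mp (norm_eq_zero.mp (by linarith [norm_nonneg (y - z)]))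
  · subst hfz
    refine tendsto_iterate_of_dist_le_mul (r := r / 2) (K := 2⁻¹) (by norm_num) (by norm_num)
      (fun y hy => ?_) (mem_ball_comm.mp hz)
    have hy' : y ∈ ball x₀ r := by
      rw [mem_ball] at hy hz ⊢
      linarith [dist_triangle y z x₀]
    simpa only [dist_eq_norm] using hcontr y hy' z (hsub hz)

end Newton

section Wirtinger

open Complex

theorem ContinuousLinearMap.apply_eq_wirtinger (L : ℂ →L[ℝ] ℂ) (w : ℂ) :
    L w = (L 1 - I * L I) / 2 * w + (L 1 + I * L I) / 2 * conj w := by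
  have hw : w = w.re • (1 : ℂ) + w.im • I := by rw [real_smul, real_smul, mul_one, re_add_im]
  have hL : L w = w.re * L 1 + w.im * L I := by
    rw [hw, map_add, map_smul, map_smul, real_smul, real_smul]; simp
  rw [hL]
  conv_rhs => rw [← re_add_im w]
  simp only [map_add, map_mul, conj_ofReal, conj_I]
  linear_combination (w.im * L I) * I_sq

theorem fderiv_apply_eq_wDz_add_wDzbar (f : ℂ → ℂ) (z w : ℂ) :
    fderiv ℝ f z w = wDz f z * w + wDzbar f z * conj w :=
  (fderiv ℝ f z).apply_eq_wirtinger w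

-- `v ↦ conj a * v - b * conj v` is the adjugate of `w ↦ a * w + b * conj w`, whose determinant
-- as a real-linear map is `‖a‖ ^ 2 - ‖b‖ ^ 2`.
theorem wirtinger_adjugate_comp (a b w : ℂ) :
    conj a * (a * w + b * conj w) - b * conj (a * w + b * conj w) =
      ((‖a‖ ^ 2 - ‖b‖ ^ 2 : ℝ) : ℂ) * w := by
  push_cast [← mul_conj']
  simp only [map_add, map_mul, conj_conj]
  ring

theorem wirtinger_comp_adjugate (a b v : ℂ) :
    a * (conj a * v - b * conj v) + b * conj (conj a * v - b * conj v) =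
      ((‖a‖ ^ 2 - ‖b‖ ^ 2 : ℝ) : ℂ) * v := by
  push_cast [← mul_conj']
  simp only [map_sub, map_mul, conj_conj]
  ring

theorem wirtinger_comp_adjugate_div {a b : ℂ} (hJ : ((‖a‖ ^ 2 - ‖b‖ ^ 2 : ℝ) : ℂ) ≠ 0) (v : ℂ) :
    a * ((conj a * v - b * conj v) / ((‖a‖ ^ 2 - ‖b‖ ^ 2 : ℝ) : ℂ)) +
      b * conj ((conj a * v - b * conj v) / ((‖a‖ ^ 2 - ‖b‖ ^ 2 : ℝ) : ℂ)) = v := by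
  rw [map_div₀, conj_ofReal, mul_div_assoc', mul_div_assoc', ← add_div, wirtinger_comp_adjugate,
    mul_div_cancel_left₀ _ hJ]

variable {L : ℂ →L[ℝ] ℂ} {a b : ℂ}

theorem ContinuousLinearMap.isInvertible_of_wirtinger (hL : ∀ w, L w = a * w + b * conj w)
    (hJ : ‖a‖ ^ 2 ≠ ‖b‖ ^ 2) : L.IsInvertible := by
  have hJ' : ((‖a‖ ^ 2 - ‖b‖ ^ 2 : ℝ) : ℂ) ≠ 0 := by exact_mod_cast sub_ne_zero.mpr hJ
  have hinj : Function.Injective L := fun w w' h => by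
    have := congrArg (fun v => conj a * v - b * conj v) h
    simp only [hL, wirtinger_adjugate_comp] at this
    exact mul_left_cancel₀ hJ' this
  have hsurj : Function.Surjective L := fun v => by
    refine ⟨(conj a * v - b * conj v) / ((‖a‖ ^ 2 - ‖b‖ ^ 2 : ℝ) : ℂ), ?_⟩
    rw [hL, wirtinger_comp_adjugate_div hJ']
  exact ⟨(LinearEquiv.ofBijective L.toLinearMap ⟨hinj, hsurj⟩).toContinuousLinearEquiv, rfl⟩

theorem ContinuousLinearMap.not_isInvertible_of_wirtinger (hL : ∀ w, L w = a * w + b * conj w)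
    (hJ : ‖a‖ ^ 2 = ‖b‖ ^ 2) : ¬ L.IsInvertible := by
  intro hinv
  have hadj : ∀ v, conj a * v - b * conj v = 0 := fun v => hinv.injective <| by
    rw [map_zero, hL, wirtinger_comp_adjugate, hJ, sub_self, ofReal_zero, zero_mul]
  have hb : b = 0 := by
    have h1 := hadj 1
    have hI := hadj I
    simp only [map_one, mul_one, conj_I] at h1 hI
    linear_combination (-1 / 2 : ℂ) * h1 + (-I / 2) * hI + ((conj a + b) / 2) * I_sq
  have ha : a = 0 := by simpa [hb] using hadj 1
  exact one_ne_zero (hinv.injective (by rw [hL, hL, ha, hb]; simp))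

theorem ContinuousLinearMap.inverse_apply_of_wirtinger (hL : ∀ w, L w = a * w + b * conj w)
    (v : ℂ) :
    L.inverse v = (conj a * v - b * conj v) / ((‖a‖ ^ 2 - ‖b‖ ^ 2 : ℝ) : ℂ) := by
  by_cases hJ : ‖a‖ ^ 2 = ‖b‖ ^ 2
  · -- both sides are junk values: `ContinuousLinearMap.inverse` and division by zero give `0`
    rw [inverse_of_not_isInvertible (not_isInvertible_of_wirtinger hL hJ), hJ, sub_self,
      ofReal_zero, div_zero, zero_apply]
  · have hJ' : ((‖a‖ ^ 2 - ‖b‖ ^ 2 : ℝ) : ℂ) ≠ 0 := by exact_mod_cast sub_ne_zero.mpr hJ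
    rw [(isInvertible_of_wirtinger hL hJ).inverse_apply_eq, hL, wirtinger_comp_adjugate_div hJ']

end Wirtinger

theorem newtonMap_eq_fderivNewtonMap (f : ℂ → ℂ) (η : ℂ) : newtonMap f η = fderivNewtonMap f η := by
  funext z
  rw [fderivNewtonMap,
    ContinuousLinearMap.inverse_apply_of_wirtinger (fderiv_apply_eq_wDz_add_wDzbar f z)]
  rfl

theorem IsHarmonicMappingOn.contDiffAt {f : ℂ → ℂ} {Ω : Set ℂ} (hf : IsHarmonicMappingOn f Ω)
    {z : ℂ} (hz : z ∈ Ω) {n : WithTop ℕ∞} : ContDiffAt ℝ n f z := by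
  obtain ⟨ε, hε, -, h, g, hh, hg, hfeq⟩ := hf z hz
  have hball : ball z ε ∈ 𝓝 z := ball_mem_nhds z hε
  have hh' : ContDiffAt ℝ n h z := ((hh.contDiffOn isOpen_ball).contDiffAt hball).restrict_scalars ℝ
  have hg' : ContDiffAt ℝ n (fun w => conj (g w)) z :=
    Complex.conjCLE.contDiff.contDiffAt.comp z
      (((hg.contDiffOn isOpen_ball).contDiffAt hball).restrict_scalars ℝ)
  exact (hh'.add hg').congr_of_eventuallyEq (eventually_of_mem hball hfeq)

theorem local_continuation_general (Ω : Set ℂ) (f : ℂ → ℂ)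
    (hf : IsHarmonicMappingOn f Ω) (z₀ : ℂ) (hz₀ : z₀ ∈ Ω)
    (hJ : ‖wDz f z₀‖ ^ 2 ≠ ‖wDzbar f z₀‖ ^ 2)
    (η₁ : ℂ) (hη₁ : η₁ = f z₀) :
    ∃ ε > 0, ∃ δ > 0, ∀ η₂ : ℂ, ‖η₂ - η₁‖ < ε →
      (∃! zstar : ℂ, ‖zstar - z₀‖ < δ ∧ f zstar = η₂) ∧
      ∀ zstar : ℂ, ‖zstar - z₀‖ < δ → f zstar = η₂ →
        NewtonAttracts f η₂ z₀ zstar := by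
  obtain ⟨ε, hε, δ, hδ, hnewton⟩ := (hf.contDiffAt hz₀).exists_unique_solution_newton_tendsto
    (ContinuousLinearMap.isInvertible_of_wirtinger (fderiv_apply_eq_wDz_add_wDzbar f z₀) hJ)
  refine ⟨ε, hε, δ, hδ, fun η₂ hη₂ => ?_⟩
  obtain ⟨hunique, hattract⟩ := hnewton η₂ (by rwa [mem_ball, dist_eq_norm, ← hη₁])
  simp only [mem_ball, dist_eq_norm] at hunique hattract
  simp only [NewtonAttracts, newtonMap_eq_fderivNewtonMap]
  exact ⟨hunique, hattract⟩

/-- Local continuation: if J_f(z₀) ≠ 0 and η₁ = f(z₀), then for every η₂ near η₁ there is a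
unique solution z⋆ of f(z) = η₂ near z₀, and z⋆ attracts z₀ under the Newton map of f − η₂. -/
theorem local_continuation (Ω : Set ℂ) (hΩ : IsOpen Ω) (f : ℂ → ℂ)
    (hf : IsHarmonicMappingOn f Ω) (z₀ : ℂ) (hz₀ : z₀ ∈ Ω)
    (hJ : ‖wDz f z₀‖ ^ 2 ≠ ‖wDzbar f z₀‖ ^ 2)
    (η₁ : ℂ) (hη₁ : η₁ = f z₀) :
    ∃ ε > 0, ∃ δ > 0, ∀ η₂ : ℂ, ‖η₂ - η₁‖ < ε →
      (∃! zstar : ℂ, ‖zstar - z₀‖ < δ ∧ f zstar = η₂) ∧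
      ∀ zstar : ℂ, ‖zstar - z₀‖ < δ → f zstar = η₂ →
        NewtonAttracts f η₂ z₀ zstar :=
  local_continuation_general Ω f hf z₀ hz₀ hJ η₁ hη₁
end
end
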